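/- Let F be algebraically closed and let φ be a nontrivial odd δ-superderivation of V = V_{1/2}(Z,D), i.e. δ ∉ {0,1} and φ does not belong to the supercentroid of V. Then δ = 1/2 and: (1) if the characteristic p of F is not 3, there exists a nonzero z ∈ Z such that φ(a,b) = (zb, 0) for all (a,b) ∈ V; (2) if p = 3, there exist α ∈ F and z ∈ Z, not both zero, such that φ(a,b) = (αD(D(b)) + zb, αD(a)) for all (a,b) ∈ V. -/

import Mathlib

/-! Write `φ (a, b) = (g b, f a)` with `f = evenToOdd φ`, `g = oddToEven φ`. The
superderivation identity on products of homogeneous elements reads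
`2 f(ac) = δ (f(a) c + a f(c))`, `g(ad) = 2δ (D(f a) d - f(a) D d + a g(d))` and
`2 f(D(b) d - b D(d)) = δ (g(b) d - b g(d))`. Taking `c = 1`, `a = 1` gives `f = 0` unless
`δ = 2` and `g = 0` unless `δ = 1/2`; if `δ = 2 ≠ 1/2`, the second identity leaves
`f(a) D(Z) = 0`, and `f = 0` because `D(Z)` generates the unit ideal of the `D`-simple ring `Z`.
Hence `δ = 1/2` and `g(b) = D(f b) + b g(1)`, with `f = 0` when `p ≠ 3`. When `p = 3`, `f` is a
derivation with `D(a) f(d) = f(a) D(d)`, so writing `1 = ∑ rᵢ D(aᵢ)` gives `f = w D`; the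
odd-odd identity says `f ∘ D = D ∘ f`, i.e. `D(w) D(Z) = 0`, so `D w = 0` and `w` is a
scalar. -/

/-- The product of the Jordan superalgebra `V_{1/2}(Z,D)` on `Z × Z`
(even part `Z × 0`, odd part `0 × Z`):
`(a,b)·(c,d) = (ac + D(b)d − bD(d), (1/2)(ad + bc))`. -/
def vmul {F : Type*} [Field F] {Z : Type*} [CommRing Z] [Algebra F Z]
    (D : Z →ₗ[F] Z) (x y : Z × Z) : Z × Z :=
  (x.1 * y.1 + D x.2 * y.2 - x.2 * D y.2, (1 / 2 : F) • (x.1 * y.2 + x.2 * y.1))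

/-- `φ` is an odd `δ`-superderivation of `V_{1/2}(Z,D)`: it interchanges the even and the
odd part, and for homogeneous `x, y` it satisfies
`φ(x·y) = δ(φ(x)·y + (−1)^{p(x)} x·φ(y))`. -/
def IsOddSuperDer {F : Type*} [Field F] {Z : Type*} [CommRing Z] [Algebra F Z]
    (D : Z →ₗ[F] Z) (δ : F) (φ : Z × Z → Z × Z) : Prop :=
  (∀ a : Z, (φ (a, 0)).1 = 0) ∧ (∀ b : Z, (φ (0, b)).2 = 0) ∧
  (∀ x y : Z × Z, x.2 = 0 → (y.1 = 0 ∨ y.2 = 0) →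
    φ (vmul D x y) = δ • (vmul D (φ x) y + vmul D x (φ y))) ∧
  (∀ x y : Z × Z, x.1 = 0 → (y.1 = 0 ∨ y.2 = 0) →
    φ (vmul D x y) = δ • (vmul D (φ x) y - vmul D x (φ y)))

/-- `χ` lies in the centroid of `V_{1/2}(Z,D)`:
`χ(x·y) = χ(x)·y = x·χ(y)` for all `x, y`. -/
def InCentroid {F : Type*} [Field F] {Z : Type*} [CommRing Z] [Algebra F Z]
    (D : Z →ₗ[F] Z) (χ : Z × Z → Z × Z) : Prop :=
  ∀ x y : Z × Z, χ (vmul D x y) = vmul D (χ x) y ∧ χ (vmul D x y) = vmul D x (χ y)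

/-- `χ` lies in the odd part of the supercentroid of `V_{1/2}(Z,D)`: it is odd and
`χ(x·y) = χ(x)·y = (−1)^{p(x)} x·χ(y)` for all homogeneous `x, y`. -/
def InOddSupercentroid {F : Type*} [Field F] {Z : Type*} [CommRing Z] [Algebra F Z]
    (D : Z →ₗ[F] Z) (χ : Z × Z → Z × Z) : Prop :=
  (∀ a : Z, (χ (a, 0)).1 = 0) ∧ (∀ b : Z, (χ (0, b)).2 = 0) ∧
  (∀ x y : Z × Z, (x.1 = 0 ∨ x.2 = 0) → (y.1 = 0 ∨ y.2 = 0) →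
    χ (vmul D x y) = vmul D (χ x) y) ∧
  (∀ x y : Z × Z, x.2 = 0 → (y.1 = 0 ∨ y.2 = 0) →
    χ (vmul D x y) = vmul D x (χ y)) ∧
  (∀ x y : Z × Z, x.1 = 0 → (y.1 = 0 ∨ y.2 = 0) →
    χ (vmul D x y) = - vmul D x (χ y))

section

variable {R : Type*} [CommRing R]

lemma map_one_eq_zero_of_leibniz {D : R → R} (hD : ∀ a b : R, D (a * b) = D a * b + a * D b) :
    D 1 = 0 := by
  simpa using hD 1 1

lemma span_range_eq_top_of_simple {D : R → R} (hD0 : ∃ b, D b ≠ 0)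
    (hsimple : ∀ I : Ideal R, (∀ x ∈ I, D x ∈ I) → I = ⊥ ∨ I = ⊤) :
    Ideal.span (Set.range D) = ⊤ := by
  have hinv : ∀ x ∈ Ideal.span (Set.range D), D x ∈ Ideal.span (Set.range D) :=
    fun x _ => Ideal.subset_span (Set.mem_range_self x)
  refine (hsimple _ hinv).resolve_left fun hbot => ?_
  obtain ⟨b, hb⟩ := hD0
  have hmem : D b ∈ Ideal.span (Set.range D) := Ideal.subset_span ⟨b, rfl⟩
  exact hb (by simpa [hbot] using hmem)

lemma eq_zero_of_mul_eq_zero_of_span_eq_top {S : Set R} (hS : Ideal.span S = ⊤) {c : R}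
    (hc : ∀ s ∈ S, c * s = 0) : c = 0 := by
  have hle : Ideal.span S ≤ LinearMap.ker (LinearMap.mulLeft R c) := Ideal.span_le.mpr hc
  simpa using hle (hS ▸ Submodule.mem_top : (1 : R) ∈ Ideal.span S)

lemma exists_eq_mul_of_cross_mul_eq {ι : Type*} {u f : ι → R}
    (hu : Ideal.span (Set.range u) = ⊤) (h : ∀ i j, u i * f j = f i * u j) :
    ∃ w, ∀ j, f j = w * u j := by
  obtain ⟨c, hc⟩ := Finsupp.mem_ideal_span_range_iff_exists_finsupp.mp
    (hu ▸ Submodule.mem_top : (1 : R) ∈ Ideal.span (Set.range u))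
  refine ⟨c.sum fun i a => a * f i, fun j => ?_⟩
  calc f j = f j * c.sum (fun i a => a * u i) := by rw [hc, mul_one]
    _ = (c.sum fun i a => a * f i) * u j := by
      simp only [Finsupp.mul_sum, Finsupp.sum_mul]
      refine Finsupp.sum_congr fun i _ => ?_
      linear_combination c i * h i j

end

lemma half_eq_two_of_three_eq_zero {K : Type*} [Field K] (h3 : (3 : K) = 0) :
    (1 / 2 : K) = 2 := by
  have h2 : (2 : K) ≠ 0 := fun h => one_ne_zero (by linear_combination h3 - h : (1 : K) = 0)
  rw [div_eq_iff h2]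
  linear_combination -h3

lemma ringChar_eq_three_iff {R : Type*} [NonAssocRing R] [Nontrivial R] :
    ringChar R = 3 ↔ (3 : R) = 0 := by
  simpa using ringChar.eq_iff.trans (CharP.charP_iff_prime_eq_zero (R := R) Nat.prime_three)

section VHalf

variable {F : Type*} [Field F] {Z : Type*} [CommRing Z] [Algebra F Z] (D : Z →ₗ[F] Z)

@[simp] lemma vmul_even_even (a c : Z) : vmul D (a, 0) (c, 0) = (a * c, 0) := by
  simp [vmul]

@[simp] lemma vmul_even_odd (a d : Z) : vmul D (a, 0) (0, d) = (0, (1 / 2 : F) • (a * d)) := by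
  simp [vmul]

@[simp] lemma vmul_odd_even (b c : Z) : vmul D (0, b) (c, 0) = (0, (1 / 2 : F) • (b * c)) := by
  simp [vmul]

@[simp] lemma vmul_odd_odd (b d : Z) : vmul D (0, b) (0, d) = (D b * d - b * D d, 0) := by
  simp [vmul]

lemma inOddSupercentroid_zero : InOddSupercentroid D 0 := by
  refine ⟨fun _ => rfl, fun _ => rfl, ?_, ?_, ?_⟩ <;> simp [vmul, Prod.ext_iff]

end VHalf

def evenToOdd {Z : Type*} [Zero Z] (φ : Z × Z → Z × Z) (a : Z) : Z := (φ (a, 0)).2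

def oddToEven {Z : Type*} [Zero Z] (φ : Z × Z → Z × Z) (b : Z) : Z := (φ (0, b)).1

namespace IsOddSuperDer

variable {F : Type*} [Field F] {Z : Type*} [CommRing Z] [Algebra F Z] {D : Z →ₗ[F] Z} {δ : F}
  {φ : Z × Z →ₗ[F] Z × Z}

lemma apply_even (hφ : IsOddSuperDer D δ φ) (a : Z) : φ (a, 0) = (0, evenToOdd φ a) :=
  Prod.ext (hφ.1 a) rfl

lemma apply_odd (hφ : IsOddSuperDer D δ φ) (b : Z) : φ (0, b) = (oddToEven φ b, 0) :=
  Prod.ext rfl (hφ.2.1 b)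

lemma apply_eq (hφ : IsOddSuperDer D δ φ) (a b : Z) :
    φ (a, b) = (oddToEven φ b, evenToOdd φ a) := by
  rw [← add_zero a, ← zero_add b, ← Prod.mk_add_mk, map_add, hφ.apply_even, hφ.apply_odd]
  simp

lemma oddToEven_smul (c : F) (x : Z) : oddToEven φ (c • x) = c • oddToEven φ x := by
  simp only [oddToEven, ← Prod.smul_fst, ← map_smul, Prod.smul_mk, smul_zero]

variable (h2 : (2 : F) ≠ 0)
include h2

lemma even_mul_even (hφ : IsOddSuperDer D δ φ) (a c : Z) :
    (2 : F) • evenToOdd φ (a * c) = δ • (evenToOdd φ a * c + a * evenToOdd φ c) := by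
  have h := congrArg Prod.snd (hφ.2.2.1 (a, 0) (c, 0) rfl (Or.inr rfl))
  simp only [vmul_even_even, hφ.apply_even, vmul_odd_even, vmul_even_odd, Prod.mk_add_mk,
    Prod.smul_mk] at h
  rw [h]
  match_scalars <;> field_simp

lemma even_mul_odd (hφ : IsOddSuperDer D δ φ) (a d : Z) :
    oddToEven φ (a * d) =
      (2 * δ) • (D (evenToOdd φ a) * d - evenToOdd φ a * D d + a * oddToEven φ d) := by
  have h := congrArg Prod.fst (hφ.2.2.1 (a, 0) (0, d) rfl (Or.inl rfl))
  simp only [vmul_even_odd, hφ.apply_odd, hφ.apply_even, vmul_odd_odd, vmul_even_even,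
    Prod.mk_add_mk, Prod.smul_mk, oddToEven_smul] at h
  rw [mul_smul, ← h, smul_smul, mul_one_div_cancel h2, one_smul]

lemma odd_mul_odd (hφ : IsOddSuperDer D δ φ) (b d : Z) :
    (2 : F) • evenToOdd φ (D b * d - b * D d) =
      δ • (oddToEven φ b * d - b * oddToEven φ d) := by
  have h := congrArg Prod.snd (hφ.2.2.2 (0, b) (0, d) rfl (Or.inl rfl))
  simp only [vmul_odd_odd, hφ.apply_odd, hφ.apply_even, vmul_even_odd, vmul_odd_even,
    Prod.mk_sub_mk, Prod.smul_mk] at h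
  rw [h]
  match_scalars <;> field_simp

lemma evenToOdd_one (hφ : IsOddSuperDer D δ φ) (hδ1 : δ ≠ 1) : evenToOdd φ 1 = 0 := by
  have h := hφ.even_mul_even h2 1 1
  simp only [mul_one, one_mul] at h
  have h' : ((2 : F) * (1 - δ)) • evenToOdd φ 1 = 0 := by
    linear_combination (norm := module) h
  exact (smul_eq_zero.mp h').resolve_left (mul_ne_zero h2 (sub_ne_zero.mpr hδ1.symm))

lemma evenToOdd_eq_zero_of_ne_two (hφ : IsOddSuperDer D δ φ) (hδ1 : δ ≠ 1) (hδ2 : δ ≠ 2)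
    (a : Z) : evenToOdd φ a = 0 := by
  have h := hφ.even_mul_even h2 a 1
  simp only [mul_one, hφ.evenToOdd_one h2 hδ1, mul_zero, add_zero] at h
  have h' : ((2 : F) - δ) • evenToOdd φ a = 0 := by linear_combination (norm := module) h
  exact (smul_eq_zero.mp h').resolve_left (sub_ne_zero.mpr hδ2.symm)

lemma evenToOdd_mul_of_eq_two (hφ : IsOddSuperDer D δ φ) (hδ : δ = 2) (a c : Z) :
    evenToOdd φ (a * c) = evenToOdd φ a * c + a * evenToOdd φ c :=
  smul_right_injective Z h2 ((hφ.even_mul_even h2 a c).trans (by rw [hδ]))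

lemma oddToEven_eq_zero_of_ne_half (hφ : IsOddSuperDer D δ φ) (hδ1 : δ ≠ 1)
    (hδ : δ ≠ 1 / 2) (d : Z) : oddToEven φ d = 0 := by
  have h := hφ.even_mul_odd h2 1 d
  simp only [one_mul, hφ.evenToOdd_one h2 hδ1, map_zero, zero_mul, sub_zero, zero_add] at h
  have h' : (1 - 2 * δ) • oddToEven φ d = 0 := by linear_combination (norm := module) h
  refine (smul_eq_zero.mp h').resolve_left fun h0 => hδ ?_
  rw [eq_div_iff h2]
  linear_combination -h0

variable (hD : ∀ a b : Z, D (a * b) = D a * b + a * D b)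
include hD

lemma evenToOdd_eq_zero_of_oddToEven_eq_zero (hφ : IsOddSuperDer D δ φ)
    (hspan : Ideal.span (Set.range D) = ⊤) (hδ0 : δ ≠ 0) (hg : ∀ d, oddToEven φ d = 0)
    (a : Z) : evenToOdd φ a = 0 := by
  have hB : ∀ d, D (evenToOdd φ a) * d - evenToOdd φ a * D d = 0 := fun d => by
    have h := hφ.even_mul_odd h2 a d
    rw [hg, hg, mul_zero, add_zero, eq_comm, smul_eq_zero] at h
    exact h.resolve_left (mul_ne_zero h2 hδ0)
  have hDf : D (evenToOdd φ a) = 0 := by simpa [map_one_eq_zero_of_leibniz hD] using hB 1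
  refine eq_zero_of_mul_eq_zero_of_span_eq_top hspan (Set.forall_mem_range.mpr fun d => ?_)
  simpa [hDf] using hB d

lemma eq_zero_of_ne_half (hφ : IsOddSuperDer D δ φ)
    (hspan : Ideal.span (Set.range D) = ⊤) (hδ1 : δ ≠ 1) (hδ : δ ≠ 1 / 2) : φ = 0 := by
  have hg := hφ.oddToEven_eq_zero_of_ne_half h2 hδ1 hδ
  have hf : ∀ a, evenToOdd φ a = 0 := by
    by_cases hδ2 : δ = 2
    · exact hφ.evenToOdd_eq_zero_of_oddToEven_eq_zero h2 hD hspan (hδ2 ▸ h2) hg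
    · exact hφ.evenToOdd_eq_zero_of_ne_two h2 hδ1 hδ2
  ext a <;> simp [hφ.apply_eq, hf, hg]

lemma oddToEven_eq_of_half (hφ : IsOddSuperDer D δ φ) (hδ : δ = 1 / 2) (b : Z) :
    oddToEven φ b = D (evenToOdd φ b) + b * oddToEven φ 1 := by
  have h := hφ.even_mul_odd h2 b 1
  simpa only [mul_one, map_one_eq_zero_of_leibniz hD, mul_zero, sub_zero, hδ,
    mul_one_div_cancel h2, one_smul] using h

lemma apply_eq_of_half (hφ : IsOddSuperDer D δ φ) (hδ : δ = 1 / 2) (h3 : (3 : F) ≠ 0)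
    (a b : Z) :
    φ (a, b) = (oddToEven φ 1 * b, 0) := by
  have hδ1 : δ ≠ 1 := fun h => h2 <| by
    rw [hδ, div_eq_one_iff_eq h2] at h
    linear_combination -2 * h
  have hδ2 : δ ≠ 2 := fun h => h3 (by rw [hδ, div_eq_iff h2] at h; linear_combination -h)
  have hf := hφ.evenToOdd_eq_zero_of_ne_two h2 hδ1 hδ2
  rw [hφ.apply_eq, hφ.oddToEven_eq_of_half h2 hD hδ, hf, hf, map_zero, zero_add, mul_comm]

section CharThree

variable (hδ : δ = 1 / 2) (h3 : (3 : F) = 0)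
include hδ h3

lemma evenToOdd_cross_mul_eq_of_char_three (hφ : IsOddSuperDer D δ φ) (a d : Z) :
    D a * evenToOdd φ d = evenToOdd φ a * D d := by
  have h3Z : (3 : Z) = 0 := by
    simpa only [map_ofNat, map_zero] using congrArg (algebraMap F Z) h3
  have h := hφ.even_mul_odd h2 a d
  rw [hφ.oddToEven_eq_of_half h2 hD hδ (a * d), hφ.oddToEven_eq_of_half h2 hD hδ d,
    hφ.evenToOdd_mul_of_eq_two h2 (hδ.trans (half_eq_two_of_three_eq_zero h3)), hδ,
    mul_one_div_cancel h2, one_smul, map_add, hD, hD] at h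
  linear_combination h - evenToOdd φ a * D d * h3Z

lemma evenToOdd_map_eq_map_evenToOdd_of_char_three (hφ : IsOddSuperDer D δ φ) (b : Z) :
    evenToOdd φ (D b) = D (evenToOdd φ b) := by
  have h := hφ.odd_mul_odd h2 b 1
  rw [mul_one, mul_one, map_one_eq_zero_of_leibniz hD, mul_zero, sub_zero,
    hδ.trans (half_eq_two_of_three_eq_zero h3)] at h
  rw [smul_right_injective Z h2 h, hφ.oddToEven_eq_of_half h2 hD hδ b]
  ring

lemma exists_evenToOdd_eq_smul_of_char_three (hφ : IsOddSuperDer D δ φ)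
    (hspan : Ideal.span (Set.range D) = ⊤)
    (hker : ∀ a : Z, D a = 0 → ∃ c : F, a = algebraMap F Z c) :
    ∃ α : F, ∀ a, evenToOdd φ a = α • D a := by
  obtain ⟨w, hw⟩ :=
    exists_eq_mul_of_cross_mul_eq hspan (hφ.evenToOdd_cross_mul_eq_of_char_three h2 hD hδ h3)
  have hDw : D w = 0 := by
    refine eq_zero_of_mul_eq_zero_of_span_eq_top hspan (Set.forall_mem_range.mpr fun b => ?_)
    have h := hφ.evenToOdd_map_eq_map_evenToOdd_of_char_three h2 hD hδ h3 b
    rw [hw, hw, hD] at h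
    linear_combination -h
  obtain ⟨α, rfl⟩ := hker w hDw
  exact ⟨α, fun a => by rw [hw, Algebra.smul_def]⟩

lemma exists_apply_eq_of_char_three (hφ : IsOddSuperDer D δ φ)
    (hspan : Ideal.span (Set.range D) = ⊤)
    (hker : ∀ a : Z, D a = 0 → ∃ c : F, a = algebraMap F Z c) :
    ∃ α : F, ∀ a b, φ (a, b) = (α • D (D b) + oddToEven φ 1 * b, α • D a) := by
  obtain ⟨α, hα⟩ := hφ.exists_evenToOdd_eq_smul_of_char_three h2 hD hδ h3 hspan hker
  refine ⟨α, fun a b => ?_⟩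
  rw [hφ.apply_eq, hφ.oddToEven_eq_of_half h2 hD hδ, hα, hα, map_smul, mul_comm]

end CharThree

end IsOddSuperDer

theorem nontrivial_odd_delta_superderivation_of_V_general
    {F : Type*} [Field F] (h2 : ringChar F ≠ 2)
    {Z : Type*} [CommRing Z] [Algebra F Z]
(D : Z →ₗ[F] Z)
    (hD : ∀ a b : Z, D (a * b) = D a * b + a * D b)
    (hD0 : D ≠ 0)
    (hsimple : ∀ I : Ideal Z, (∀ x ∈ I, D x ∈ I) → I = ⊥ ∨ I = ⊤)
    (hker : ∀ a : Z, D a = 0 → ∃ c : F, a = algebraMap F Z c)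
    (δ : F) (hδ1 : δ ≠ 1)
    (φ : Z × Z →ₗ[F] Z × Z)
    (hsd : IsOddSuperDer D δ ⇑φ)
    (hnt : ¬ InOddSupercentroid D ⇑φ) :
    δ = 1 / 2 ∧
    (ringChar F ≠ 3 →
      ∃ z : Z, z ≠ 0 ∧ ∀ a b : Z, φ (a, b) = (z * b, 0)) ∧
    (ringChar F = 3 →
      ∃ (α : F) (z : Z), ¬ (α = 0 ∧ z = 0) ∧
        ∀ a b : Z, φ (a, b) = (α • D (D b) + z * b, α • D a)) := by
  have h2F : (2 : F) ≠ 0 := Ring.two_ne_zero h2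
  have hspan : Ideal.span (Set.range D) = ⊤ :=
    span_range_eq_top_of_simple (by simpa [LinearMap.ext_iff] using hD0) hsimple
  have hφ0 : φ ≠ 0 := by
    rintro rfl
    exact hnt (inOddSupercentroid_zero D)
  have hδ : δ = 1 / 2 := by
    by_contra hδ
    exact hφ0 (hsd.eq_zero_of_ne_half h2F hD hspan hδ1 hδ)
  refine ⟨hδ, fun h3 => ?_, fun h3 => ?_⟩
  · have hφab := hsd.apply_eq_of_half h2F hD hδ (mt ringChar_eq_three_iff.mpr h3)
    refine ⟨oddToEven φ 1, fun hz => hφ0 ?_, hφab⟩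
    ext a <;> simp [hφab, hz]
  · obtain ⟨α, hφab⟩ :=
      hsd.exists_apply_eq_of_char_three h2F hD hδ (ringChar_eq_three_iff.mp h3) hspan hker
    refine ⟨α, oddToEven φ 1, ?_, hφab⟩
    rintro ⟨rfl, hz⟩
    exact hφ0 (by ext a <;> simp [hφab, hz])

/-- (F algebraically closed of characteristic p ≠ 2)  A nontrivial odd
`δ`-superderivation `φ` of `V_{1/2}(Z,D)` (i.e. `δ ∉ {0,1}` and `φ` is not in the
supercentroid) occurs only for `δ = 1/2`; then for `p ≠ 3` one has
`φ(a,b) = (zb, 0)` for some nonzero `z ∈ Z`, while for `p = 3` one has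
`φ(a,b) = (αD(D(b)) + zb, αD(a))` for some `α ∈ F`, `z ∈ Z` not both zero. -/
theorem nontrivial_odd_delta_superderivation_of_V
    {F : Type*} [Field F] [IsAlgClosed F] (h2 : ringChar F ≠ 2)
    {Z : Type*} [CommRing Z] [Algebra F Z]
(D : Z →ₗ[F] Z)
    (hD : ∀ a b : Z, D (a * b) = D a * b + a * D b)
    (hD0 : D ≠ 0)
    (hsimple : ∀ I : Ideal Z, (∀ x ∈ I, D x ∈ I) → I = ⊥ ∨ I = ⊤)
    (hker : ∀ a : Z, D a = 0 → ∃ c : F, a = algebraMap F Z c)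
    (δ : F) (hδ0 : δ ≠ 0) (hδ1 : δ ≠ 1)
    (φ : Z × Z →ₗ[F] Z × Z)
    (hsd : IsOddSuperDer D δ ⇑φ)
    (hnt : ¬ InOddSupercentroid D ⇑φ) :
    δ = 1 / 2 ∧
    (ringChar F ≠ 3 →
      ∃ z : Z, z ≠ 0 ∧ ∀ a b : Z, φ (a, b) = (z * b, 0)) ∧
    (ringChar F = 3 →
      ∃ (α : F) (z : Z), ¬ (α = 0 ∧ z = 0) ∧
        ∀ a b : Z, φ (a, b) = (α • D (D b) + z * b, α • D a)) :=
  nontrivial_odd_delta_superderivation_of_V_general h2 D hD hD0 hsimple hker δ hδ1 φ hsd hnt
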